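/- Let A be an n×s real matrix and B an n×m real matrix such that the n×(s+m) matrix M = [A B] has linearly independent columns and the smallest eigenvalue of MᵀM is at least τ > 0. Then for every β ∈ ℝˢ, ‖(I_n − Π_B)Aβ‖₂² ≥ τ‖β‖₂², where Π_B = B(BᵀB)⁻¹Bᵀ is the orthogonal projection onto the column space of B. -/

import Mathlib

/-!
Writing the residual as `(I - Π_B) A β = A β + B γ` with `γ = -(BᵀB)⁻¹BᵀAβ` exhibits it as
`[A B] (β, γ)`. The eigenvalue bound on `[A B]ᵀ[A B]` then gives
`‖(I - Π_B) A β‖² ≥ τ (‖β‖² + ‖γ‖²) ≥ τ ‖β‖²`; nothing about projections is needed beyond this.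
-/

open Matrix

section

variable {R : Type*} {l m n : Type*} [Fintype l] [Fintype m] [Fintype n]

theorem dotProduct_transpose_mul_self_mulVec [CommSemiring R] (M : Matrix l n R) (v : n → R) :
    v ⬝ᵥ ((Mᵀ * M) *ᵥ v) = (M *ᵥ v) ⬝ᵥ (M *ᵥ v) := by
  rw [← mulVec_mulVec, dotProduct_mulVec, vecMul_transpose]

theorem mul_dotProduct_self_le_of_fromCols [CommRing R] [LinearOrder R] [IsStrictOrderedRing R]
    (A : Matrix l m R) (B : Matrix l n R) {τ : R} (hτ : 0 ≤ τ)
    (hgram : ∀ v, τ * (v ⬝ᵥ v) ≤ v ⬝ᵥ (((fromCols A B)ᵀ * fromCols A B) *ᵥ v))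
    (β : m → R) (γ : n → R) :
    τ * (β ⬝ᵥ β) ≤ (A *ᵥ β + B *ᵥ γ) ⬝ᵥ (A *ᵥ β + B *ᵥ γ) := by
  have hγ : 0 ≤ γ ⬝ᵥ γ := Finset.sum_nonneg fun i _ => mul_self_nonneg (γ i)
  calc τ * (β ⬝ᵥ β) ≤ τ * (β ⬝ᵥ β + γ ⬝ᵥ γ) := by gcongr; exact le_add_of_nonneg_right hγ
    _ = τ * (Sum.elim β γ ⬝ᵥ Sum.elim β γ) := by rw [sumElim_dotProduct_sumElim]
    _ ≤ _ := hgram _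
    _ = _ := by rw [dotProduct_transpose_mul_self_mulVec, fromCols_mulVec_sumElim]

theorem one_sub_mul_mulVec [Ring R] [DecidableEq l] (B : Matrix l n R) (P : Matrix n l R) (x : l → R) :
    (1 - B * P) *ᵥ x = x + B *ᵥ -(P *ᵥ x) := by
  rw [sub_mulVec, one_mulVec, mulVec_neg, mulVec_mulVec, sub_eq_add_neg]

theorem sum_sq_eq_dotProduct_self [CommSemiring R] (v : n → R) : ∑ i, v i ^ 2 = v ⬝ᵥ v := by
  simp only [dotProduct, sq]

end

theorem resid_norm_sq_ge_of_eigen_bound_general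
    (n s m : ℕ) (A : Matrix (Fin n) (Fin s) ℝ) (B : Matrix (Fin n) (Fin m) ℝ)
    (M : Matrix (Fin n) (Fin s ⊕ Fin m) ℝ)
    (hM : M = Matrix.fromCols A B)
    (τ : ℝ) (hτ : 0 < τ)
    (heig : ∀ v : Fin s ⊕ Fin m → ℝ, τ * (v ⬝ᵥ v) ≤ v ⬝ᵥ ((Mᵀ * M) *ᵥ v)) :
    ∀ β : Fin s → ℝ,
      τ * ∑ l, β l ^ 2 ≤ ∑ i, ((1 - B * (Bᵀ * B)⁻¹ * Bᵀ) *ᵥ (A *ᵥ β)) i ^ 2 := by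
  intro β
  subst hM
  rw [sum_sq_eq_dotProduct_self, sum_sq_eq_dotProduct_self, Matrix.mul_assoc, one_sub_mul_mulVec]
  exact mul_dotProduct_self_le_of_fromCols A B hτ.le heig β _

/-- Let `A` be `n × s`, `B` be `n × m`, and suppose the concatenated
matrix `M = [A B]` has linearly independent columns with smallest eigenvalue of `MᵀM`
at least `τ > 0`.  Then for every `β ∈ ℝˢ`,
`‖(I - Π_B) A β‖₂² ≥ τ ‖β‖₂²`, where `Π_B = B(BᵀB)⁻¹Bᵀ`. -/
theorem resid_norm_sq_ge_of_eigen_bound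
    (n s m : ℕ) (A : Matrix (Fin n) (Fin s) ℝ) (B : Matrix (Fin n) (Fin m) ℝ)
    (M : Matrix (Fin n) (Fin s ⊕ Fin m) ℝ)
    (hM : M = Matrix.fromCols A B)
    (hind : LinearIndependent ℝ fun k : Fin s ⊕ Fin m => (fun i => M i k))
    (τ : ℝ) (hτ : 0 < τ)
    (heig : ∀ v : Fin s ⊕ Fin m → ℝ, τ * (v ⬝ᵥ v) ≤ v ⬝ᵥ ((Mᵀ * M) *ᵥ v)) :
    ∀ β : Fin s → ℝ,
      τ * ∑ l, β l ^ 2 ≤ ∑ i, ((1 - B * (Bᵀ * B)⁻¹ * Bᵀ) *ᵥ (A *ᵥ β)) i ^ 2 :=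
  resid_norm_sq_ge_of_eigen_bound_general n s m A B M hM τ hτ heig
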